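/- arXiv:2512.06005 — 2 statements merged into one kernel-verified Lean document; each statement's English description precedes it below -/
import Mathlib

section
/- Let (Θ, ≲) be a nonempty partially ordered set, X a nonempty finite set, and U : X × Θ → ℝ. Suppose that (i) for all x, y ∈ X the function θ ↦ U(y,θ) − U(x,θ) is single-crossing, and (ii) for each y ∈ X the family {θ ↦ U(y,θ) − U(x,θ) : x ∈ X} satisfies signed-ratio monotonicity. Then for all θ ≲ θ′ in Θ, the function U(·,θ) is less risk-averse than U(·,θ′). -/
/-!
Fix `y` and a lottery `p`. The gap `U(y,θ) - ∑ₓ U(x,θ) p(x)` equals `∑ₓ p(x) (U(y,θ) - U(x,θ))`,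
so it suffices that a nonnegative combination of single-crossing functions is single-crossing
when the family satisfies signed-ratio monotonicity (Quah–Strulovici aggregation). If some
summand is positive at `θ`, take the smallest growth ratio `c = φⱼ(θ')/φⱼ(θ)` among the positive
summands; signed-ratio monotonicity makes every summand, negative ones included, grow at least
by the factor `c`, so the sum at `θ'` dominates `c` times the sum at `θ`. Otherwise all summands
are nonpositive at `θ`, and a nonnegative sum forces all of them to vanish.
-/

open Finset

/-- A lottery on a finite set `X`: a function `p : X → [0,1]` summing to 1. -/
def IsLottery {X : Type*} [Fintype X] (p : X → ℝ) : Prop :=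
  (∀ x, 0 ≤ p x ∧ p x ≤ 1) ∧ ∑ x, p x = 1

/-- `u` is less risk-averse than `v` (Yaari). -/
def LessRiskAverse {X : Type*} [Fintype X] (u v : X → ℝ) : Prop :=
  ∀ (y : X) (p : X → ℝ), IsLottery p →
    (u y ≥ ∑ x, u x * p x → v y ≥ ∑ x, v x * p x) ∧
    (u y > ∑ x, u x * p x → v y > ∑ x, v x * p x)

/-- A function `φ : Θ → ℝ` on a poset is single-crossing. -/
def SingleCrossing {Θ : Type*} [PartialOrder Θ] (φ : Θ → ℝ) : Prop :=
  ∀ ⦃θ θ' : Θ⦄, θ ≤ θ' → (φ θ ≥ 0 → φ θ' ≥ 0) ∧ (φ θ > 0 → φ θ' > 0)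

/-- A family `Φ` of functions `Θ → ℝ` satisfies signed-ratio monotonicity. -/
def SignedRatioMonotone {Θ : Type*} [PartialOrder Θ] (Φ : Set (Θ → ℝ)) : Prop :=
  ∀ φ ∈ Φ, ∀ ψ ∈ Φ, ∀ ⦃θ θ' : Θ⦄, θ ≤ θ' →
    φ θ < 0 → 0 < ψ θ → -φ θ * ψ θ' ≥ -φ θ' * ψ θ

section Aggregation

variable {Θ ι : Type*} [PartialOrder Θ]

theorem SingleCrossing.const_mul {φ : Θ → ℝ} (h : SingleCrossing φ) {c : ℝ} (hc : 0 ≤ c) :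
    SingleCrossing fun θ => c * φ θ := by
  intro θ θ' hle
  rcases hc.eq_or_lt with rfl | hc
  · simp
  · simp only [ge_iff_le, gt_iff_lt, mul_nonneg_iff_of_pos_left hc, mul_pos_iff_of_pos_left hc]
    exact h hle

theorem SignedRatioMonotone.range_mul {φ : ι → Θ → ℝ} (h : SignedRatioMonotone (Set.range φ))
    {c : ι → ℝ} (hc : ∀ i, 0 ≤ c i) :
    SignedRatioMonotone (Set.range fun i θ => c i * φ i θ) := by
  rintro _ ⟨i, rfl⟩ _ ⟨j, rfl⟩ θ θ' hle hi hj
  have hci : 0 < c i := (hc i).lt_of_ne fun h0 => by simp [← h0] at hi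
  have hcj : 0 < c j := (hc j).lt_of_ne fun h0 => by simp [← h0] at hj
  have key := h _ ⟨i, rfl⟩ _ ⟨j, rfl⟩ hle (neg_of_mul_neg_right hi hci.le)
    (pos_of_mul_pos_right hj hcj.le)
  have hcc : 0 ≤ c i * c j := by positivity
  calc -(c i * φ i θ) * (c j * φ j θ') = c i * c j * (-φ i θ * φ j θ') := by ring
    _ ≥ c i * c j * (-φ i θ' * φ j θ) := mul_le_mul_of_nonneg_left key hcc
    _ = -(c i * φ i θ') * (c j * φ j θ) := by ring

variable [Fintype ι] {φ : ι → Θ → ℝ}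

theorem exists_pos_mul_le_of_signedRatioMonotone (hsc : ∀ i, SingleCrossing (φ i))
    (hsrm : SignedRatioMonotone (Set.range φ)) {θ θ' : Θ} (hle : θ ≤ θ')
    (hpos : ∃ i, 0 < φ i θ) : ∃ c > 0, ∀ i, c * φ i θ ≤ φ i θ' := by
  have hne : (univ.filter fun i => 0 < φ i θ).Nonempty :=
    let ⟨i, hi⟩ := hpos; ⟨i, mem_filter.2 ⟨mem_univ i, hi⟩⟩
  obtain ⟨j, hj, hmin⟩ := exists_min_image _ (fun i => φ i θ' / φ i θ) hne
  have hjθ : 0 < φ j θ := (mem_filter.1 hj).2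
  have hjθ' : 0 < φ j θ' := (hsc j hle).2 hjθ
  refine ⟨φ j θ' / φ j θ, div_pos hjθ' hjθ, fun i => ?_⟩
  rw [div_mul_eq_mul_div, div_le_iff₀ hjθ]
  rcases lt_trichotomy (φ i θ) 0 with hneg | hzero | hpos
  · have := hsrm _ ⟨i, rfl⟩ _ ⟨j, rfl⟩ hle hneg hjθ
    linarith
  · have := (hsc i hle).1 hzero.ge
    rw [hzero, mul_zero]
    exact mul_nonneg this hjθ.le
  · have := hmin i (by simp [hpos])
    rwa [div_le_div_iff₀ hjθ hpos] at this

theorem SingleCrossing.sum (hsc : ∀ i, SingleCrossing (φ i))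
    (hsrm : SignedRatioMonotone (Set.range φ)) : SingleCrossing fun θ => ∑ i, φ i θ := by
  intro θ θ' hle
  by_cases hpos : ∃ i, 0 < φ i θ
  · obtain ⟨c, hc, hgrow⟩ := exists_pos_mul_le_of_signedRatioMonotone hsc hsrm hle hpos
    have hsum : c * ∑ i, φ i θ ≤ ∑ i, φ i θ' := by
      rw [mul_sum]
      exact sum_le_sum fun i _ => hgrow i
    exact ⟨fun h => (mul_nonneg hc.le h).trans hsum, fun h => (mul_pos hc h).trans_le hsum⟩
  · push Not at hpos
    have hnonpos : ∑ i, φ i θ ≤ 0 := sum_nonpos fun i _ => hpos i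
    refine ⟨fun h => ?_, fun h => absurd h hnonpos.not_gt⟩
    have hzero := (sum_eq_zero_iff_of_nonpos fun i _ => hpos i).1 (le_antisymm hnonpos h)
    exact sum_nonneg fun i _ => (hsc i hle).1 (hzero i (mem_univ i)).ge

end Aggregation

theorem stmt_2_general {Θ X : Type*} [PartialOrder Θ] [Fintype X]
    (U : X × Θ → ℝ)
    (hsc : ∀ x y : X, SingleCrossing (fun θ => U (y, θ) - U (x, θ)))
    (hsrm : ∀ y : X, SignedRatioMonotone
      {φ : Θ → ℝ | ∃ x : X, φ = fun θ => U (y, θ) - U (x, θ)}) :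
    ∀ θ θ' : Θ, θ ≤ θ' →
      LessRiskAverse (fun x => U (x, θ)) (fun x => U (x, θ')) := by
  intro θ θ' hle y p hp
  have hp0 : ∀ x, 0 ≤ p x := fun x => (hp.1 x).1
  have hrange : SignedRatioMonotone (Set.range fun x θ => U (y, θ) - U (x, θ)) := by
    simpa only [Set.range, eq_comm] using hsrm y
  have hgap : ∀ t : Θ, ∑ x, p x * (U (y, t) - U (x, t)) = U (y, t) - ∑ x, U (x, t) * p x := by
    intro t
    calc ∑ x, p x * (U (y, t) - U (x, t))
        = (∑ x, p x) * U (y, t) - ∑ x, U (x, t) * p x := by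
          rw [sum_mul, ← sum_sub_distrib]
          exact sum_congr rfl fun x _ => by ring
      _ = U (y, t) - ∑ x, U (x, t) * p x := by rw [hp.2, one_mul]
  have hcross := SingleCrossing.sum (fun x => (hsc x y).const_mul (hp0 x))
    (hrange.range_mul hp0) hle
  simpa only [hgap, ge_iff_le, gt_iff_lt, sub_nonneg, sub_pos] using hcross

theorem stmt_2 {Θ X : Type*} [PartialOrder Θ] [Nonempty Θ] [Fintype X] [Nonempty X]
    (U : X × Θ → ℝ)
    (hsc : ∀ x y : X, SingleCrossing (fun θ => U (y, θ) - U (x, θ)))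
    (hsrm : ∀ y : X, SignedRatioMonotone
      {φ : Θ → ℝ | ∃ x : X, φ = fun θ => U (y, θ) - U (x, θ)}) :
    ∀ θ θ' : Θ, θ ≤ θ' →
      LessRiskAverse (fun x => U (x, θ)) (fun x => U (x, θ')) :=
  stmt_2_general U hsc hsrm
end

section
/- Let X be a nonempty finite set and u, v : X → ℝ. Then u is less risk-averse than v if and only if there exists a convex, monotone increasing function φ from the convex hull of v(X) (a subset of ℝ) to ℝ which is strictly increasing on the image v(X) and satisfies u(x) = φ(v(x)) for every x ∈ X. -/
open Finset

/-! If `u = φ ∘ v` with `φ` convex, Jensen's inequality `φ (E_p v) ≤ E_p u` turns a `u`-comparison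
of a sure outcome `y` with a lottery `p` into a `v`-comparison, using monotonicity of `φ`; for the
weak comparison, strictness of `φ` on `v(X)` rules out `φ` rising up to `v y` and then staying flat
up to `E_p v`.

Conversely, take `φ` to be the lower convex envelope of the points `(v x, u x)`:
`φ t = min {E_p u | E_p v = t}`. It is convex because minimizers can be mixed, and being less
risk-averse says exactly that no lottery with `v`-mean `v y` has `u`-mean below `u y`, so
`φ (v y) = u y`. Sure outcomes give strict monotonicity on `v(X)`, and `φ` is monotone because a
convex function on an interval that is minimal at the left endpoint is monotone. -/

lemma ConvexOn.monotoneOn_of_isLeast_of_isMinOn {𝕜 β : Type*} [Field 𝕜] [LinearOrder 𝕜]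
    [IsStrictOrderedRing 𝕜] [AddCommMonoid β] [LinearOrder β] [IsOrderedCancelAddMonoid β]
    [Module 𝕜 β] [PosSMulStrictMono 𝕜 β] {s : Set 𝕜} {f : 𝕜 → β} {m : 𝕜}
    (hf : ConvexOn 𝕜 s f) (hm : IsLeast s m) (hfm : IsMinOn f s m) : MonotoneOn f s := by
  intro a ha b hb hab
  rcases hab.eq_or_lt with rfl | hab
  · exact le_rfl
  rcases (hm.2 ha).eq_or_lt with rfl | hma
  · exact isMinOn_iff.1 hfm b hb
  refine hf.le_right_of_left_le hm.1 hb ?_ (isMinOn_iff.1 hfm a ha)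
  rw [openSegment_eq_Ioo (hma.trans hab)]
  exact ⟨hma, hab⟩

lemma isLottery_iff_mem_stdSimplex {X : Type*} [Fintype X] {p : X → ℝ} :
    IsLottery p ↔ p ∈ stdSimplex ℝ X :=
  ⟨fun h => ⟨fun x => (h.1 x).1, h.2⟩, fun h => ⟨mem_Icc_of_mem_stdSimplex h, h.2⟩⟩

lemma lessRiskAverse_iff {X : Type*} [Fintype X] {u v : X → ℝ} :
    LessRiskAverse u v ↔ ∀ y, ∀ p ∈ stdSimplex ℝ X,
      (u ⬝ᵥ p ≤ u y → v ⬝ᵥ p ≤ v y) ∧ (u ⬝ᵥ p < u y → v ⬝ᵥ p < v y) := by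
  simp only [LessRiskAverse, isLottery_iff_mem_stdSimplex]
  rfl

section StdSimplex

variable {X : Type*} [Fintype X] {f p : X → ℝ} {c : ℝ}

lemma le_dotProduct_of_mem_stdSimplex (hp : p ∈ stdSimplex ℝ X) (hf : ∀ x, c ≤ f x) :
    c ≤ f ⬝ᵥ p :=
  calc c = ∑ x, c * p x := by rw [← Finset.mul_sum, hp.2, mul_one]
    _ ≤ f ⬝ᵥ p := Finset.sum_le_sum fun x _ => mul_le_mul_of_nonneg_right (hf x) (hp.1 x)

lemma exists_pos_lt_of_lt_dotProduct (hp : p ∈ stdSimplex ℝ X) (hc : c < f ⬝ᵥ p) :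
    ∃ x, 0 < p x ∧ c < f x := by
  by_contra! hf
  refine hc.not_ge ?_
  calc f ⬝ᵥ p ≤ ∑ x, c * p x := Finset.sum_le_sum fun x _ => by
        rcases (hp.1 x).eq_or_lt with hx | hx
        · simp [← hx]
        · exact mul_le_mul_of_nonneg_right (hf x hx) hx.le
    _ = c := by rw [← Finset.mul_sum, hp.2, mul_one]

lemma exists_lt_of_dotProduct_le (hp : p ∈ stdSimplex ℝ X) (hc : f ⬝ᵥ p ≤ c) {x₀ : X}
    (hx₀ : 0 < p x₀) (hcx₀ : c < f x₀) : ∃ x, f x < c := by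
  by_contra! hf
  refine hc.not_gt ?_
  calc c = ∑ x, c * p x := by rw [← Finset.mul_sum, hp.2, mul_one]
    _ < f ⬝ᵥ p := Finset.sum_lt_sum (fun x _ => mul_le_mul_of_nonneg_right (hf x) (hp.1 x))
        ⟨x₀, Finset.mem_univ _, mul_lt_mul_of_pos_right hcx₀ hx₀⟩

lemma mem_convexHull_range_iff_exists_dotProduct {v : X → ℝ} {t : ℝ} :
    t ∈ convexHull ℝ (Set.range v) ↔ ∃ p ∈ stdSimplex ℝ X, v ⬝ᵥ p = t := by
  classical
  constructor
  · refine fun ht => convexHull_min (t := {s | ∃ p ∈ stdSimplex ℝ X, v ⬝ᵥ p = s}) ?_ ?_ ht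
    · rintro _ ⟨x, rfl⟩
      exact ⟨Pi.single x 1, single_mem_stdSimplex ℝ x, by simp [dotProduct_single]⟩
    · rintro _ ⟨p, hp, rfl⟩ _ ⟨q, hq, rfl⟩ a b ha hb hab
      exact ⟨a • p + b • q, convex_stdSimplex ℝ X hp hq ha hb hab, by
        simp only [dotProduct_add, dotProduct_smul, smul_eq_mul]⟩
  · rintro ⟨p, hp, rfl⟩
    exact mem_convexHull_of_exists_fintype p v hp.1 hp.2 (fun x => ⟨x, rfl⟩)
      (by simp only [smul_eq_mul, dotProduct, mul_comm])

end StdSimplex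

section Envelope

variable {X : Type*} [Fintype X] (u v : X → ℝ)

/-- The lower convex envelope of the points `(v x, u x)`; outside `convexHull ℝ (Set.range v)` it
takes the junk value `sInf ∅ = 0`. -/
noncomputable def lowerConvexEnvelope (t : ℝ) : ℝ :=
  sInf ((u ⬝ᵥ ·) '' {p ∈ stdSimplex ℝ X | v ⬝ᵥ p = t})

variable {u v}

lemma isLeast_lowerConvexEnvelope {t : ℝ} (ht : t ∈ convexHull ℝ (Set.range v)) :
    IsLeast ((u ⬝ᵥ ·) '' {p ∈ stdSimplex ℝ X | v ⬝ᵥ p = t}) (lowerConvexEnvelope u v t) := by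
  have hcompact : IsCompact {p ∈ stdSimplex ℝ X | v ⬝ᵥ p = t} :=
    (isCompact_stdSimplex ℝ X).inter_right
      (isClosed_eq (continuous_const.dotProduct continuous_id) continuous_const)
  obtain ⟨p, hp, hmin⟩ := hcompact.exists_isMinOn (mem_convexHull_range_iff_exists_dotProduct.1 ht)
    (continuous_const.dotProduct continuous_id).continuousOn
  have hleast : IsLeast ((u ⬝ᵥ ·) '' {p ∈ stdSimplex ℝ X | v ⬝ᵥ p = t}) (u ⬝ᵥ p) :=
    ⟨Set.mem_image_of_mem _ hp, Set.forall_mem_image.2 hmin⟩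
  rwa [lowerConvexEnvelope, hleast.csInf_eq]

variable (u v)

lemma convexOn_lowerConvexEnvelope :
    ConvexOn ℝ (convexHull ℝ (Set.range v)) (lowerConvexEnvelope u v) := by
  refine ⟨convex_convexHull ℝ _, fun s hs t ht a b ha hb hab => ?_⟩
  obtain ⟨⟨p, ⟨hp, rfl⟩, hps⟩, -⟩ := isLeast_lowerConvexEnvelope (u := u) hs
  obtain ⟨⟨q, ⟨hq, rfl⟩, hqt⟩, -⟩ := isLeast_lowerConvexEnvelope (u := u) ht
  have hmix := (isLeast_lowerConvexEnvelope (u := u) (convex_convexHull ℝ _ hs ht ha hb hab)).2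
    ⟨a • p + b • q, ⟨convex_stdSimplex ℝ X hp hq ha hb hab, by
      simp only [dotProduct_add, dotProduct_smul]⟩, rfl⟩
  simpa only [dotProduct_add, dotProduct_smul, ← hps, ← hqt] using hmix

end Envelope

namespace LessRiskAverse

variable {X : Type*} [Fintype X] {u v : X → ℝ}

lemma le_of_le (h : LessRiskAverse u v) {a b : X} (hab : v a ≤ v b) : u a ≤ u b := by
  classical
  by_contra! hba
  have := (lessRiskAverse_iff.1 h a _ (single_mem_stdSimplex ℝ b)).2
  simp only [dotProduct_single, mul_one] at this
  exact hab.not_gt (this hba)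

lemma lt_of_lt (h : LessRiskAverse u v) {a b : X} (hab : v a < v b) : u a < u b := by
  classical
  by_contra! hba
  have := (lessRiskAverse_iff.1 h a _ (single_mem_stdSimplex ℝ b)).1
  simp only [dotProduct_single, mul_one] at this
  exact hab.not_ge (this hba)

lemma lowerConvexEnvelope_apply (h : LessRiskAverse u v) (y : X) :
    lowerConvexEnvelope u v (v y) = u y := by
  classical
  obtain ⟨⟨p, ⟨hp, hpy⟩, hpu⟩, hle⟩ :=
    isLeast_lowerConvexEnvelope (u := u) (subset_convexHull ℝ _ ⟨y, rfl⟩)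
  refine le_antisymm ?_ ?_
  · exact hle ⟨Pi.single y 1, ⟨single_mem_stdSimplex ℝ y, by simp [dotProduct_single]⟩,
      by simp [dotProduct_single]⟩
  · rw [← hpu]
    by_contra! hlt
    exact (((lessRiskAverse_iff.1 h y p hp).2 hlt).ne hpy)

lemma strictMonoOn_lowerConvexEnvelope (h : LessRiskAverse u v) :
    StrictMonoOn (lowerConvexEnvelope u v) (Set.range v) := by
  rintro _ ⟨a, rfl⟩ _ ⟨b, rfl⟩ hab
  rw [h.lowerConvexEnvelope_apply, h.lowerConvexEnvelope_apply]
  exact h.lt_of_lt hab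

lemma monotoneOn_lowerConvexEnvelope [Nonempty X] (h : LessRiskAverse u v) :
    MonotoneOn (lowerConvexEnvelope u v) (convexHull ℝ (Set.range v)) := by
  obtain ⟨x₀, hx₀⟩ := Finite.exists_min v
  refine (convexOn_lowerConvexEnvelope u v).monotoneOn_of_isLeast_of_isMinOn
    ⟨subset_convexHull ℝ _ ⟨x₀, rfl⟩, convexHull_min ?_ (convex_Ici _)⟩
    (isMinOn_iff.2 fun t ht => ?_)
  · rintro _ ⟨x, rfl⟩
    exact hx₀ x
  obtain ⟨⟨p, ⟨hp, -⟩, hpt⟩, -⟩ := isLeast_lowerConvexEnvelope (u := u) ht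
  rw [h.lowerConvexEnvelope_apply, ← hpt]
  exact le_dotProduct_of_mem_stdSimplex hp fun x => h.le_of_le (hx₀ x)

end LessRiskAverse

section Converse

variable {X : Type*} [Fintype X] {v : X → ℝ} {φ : ℝ → ℝ}

lemma ConvexOn.map_dotProduct_le (hφ : ConvexOn ℝ (convexHull ℝ (Set.range v)) φ) {p : X → ℝ}
    (hp : p ∈ stdSimplex ℝ X) : φ (v ⬝ᵥ p) ≤ (φ ∘ v) ⬝ᵥ p := by
  have := hφ.map_sum_le (t := Finset.univ) (fun x _ => hp.1 x) hp.2
    fun x _ => subset_convexHull ℝ _ ⟨x, rfl⟩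
  simpa only [dotProduct, Function.comp_apply, smul_eq_mul, mul_comm (p _)] using this

lemma lessRiskAverse_comp (hconv : ConvexOn ℝ (convexHull ℝ (Set.range v)) φ)
    (hmono : MonotoneOn φ (convexHull ℝ (Set.range v)))
    (hstrict : StrictMonoOn φ (Set.range v)) : LessRiskAverse (φ ∘ v) v := by
  have hmem : ∀ x, v x ∈ convexHull ℝ (Set.range v) := fun x => subset_convexHull ℝ _ ⟨x, rfl⟩
  refine lessRiskAverse_iff.2 fun y p hp => ?_
  have ht : v ⬝ᵥ p ∈ convexHull ℝ (Set.range v) :=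
    mem_convexHull_range_iff_exists_dotProduct.2 ⟨p, hp, rfl⟩
  have hjensen := hconv.map_dotProduct_le hp
  refine ⟨fun hle => ?_, fun hlt => ?_⟩ <;> by_contra! hvy
  · have hφt : φ (v ⬝ᵥ p) = φ (v y) := le_antisymm (hjensen.trans hle) (hmono (hmem y) ht hvy.le)
    obtain ⟨x₀, hpx₀, hvx₀⟩ := exists_pos_lt_of_lt_dotProduct hp hvy
    obtain ⟨x₁, hux₁⟩ := exists_lt_of_dotProduct_le hp hle hpx₀ (hstrict ⟨y, rfl⟩ ⟨x₀, rfl⟩ hvx₀)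
    have hvx₁ : v x₁ < v y := by
      by_contra! h
      exact hux₁.not_ge (hmono (hmem y) (hmem x₁) h)
    refine (hconv.lt_right_of_left_lt (hmem x₁) ht ?_ hux₁).ne' hφt
    rw [openSegment_eq_Ioo (hvx₁.trans hvy)]
    exact ⟨hvx₁, hvy⟩
  · exact hlt.not_ge ((hmono (hmem y) ht hvy).trans hjensen)

end Converse

theorem stmt_7 {X : Type*} [Fintype X] [Nonempty X] (u v : X → ℝ) :
    LessRiskAverse u v ↔
      ∃ φ : ℝ → ℝ,
        ConvexOn ℝ (convexHull ℝ (Set.range v)) φ ∧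
        MonotoneOn φ (convexHull ℝ (Set.range v)) ∧
        StrictMonoOn φ (Set.range v) ∧
        ∀ x : X, u x = φ (v x) := by
  refine ⟨fun h => ?_, ?_⟩
  · exact ⟨lowerConvexEnvelope u v, convexOn_lowerConvexEnvelope u v,
      h.monotoneOn_lowerConvexEnvelope, h.strictMonoOn_lowerConvexEnvelope,
      fun x => (h.lowerConvexEnvelope_apply x).symm⟩
  · rintro ⟨φ, hconv, hmono, hstrict, hval⟩
    obtain rfl : u = φ ∘ v := funext hval
    exact lessRiskAverse_comp hconv hmono hstrict
end
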